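/- If π* is a D-optimal design (with M(π*) invertible, maximizing det M(π) over all designs), then max_{1≤i≤k} φ_iᵀ M(π*)⁻¹ φ_i = d. -/

import Mathlib

open Matrix BigOperators

/-- A design is a probability vector over the `k` candidate points. -/
def IsDesign {k : ℕ} (π : Fin k → ℝ) : Prop :=
  (∀ i, 0 ≤ π i) ∧ ∑ i, π i = 1

/-- The information matrix `M(π) = ∑ i, π i • φ i φ iᵀ` of a design. -/
noncomputable def infoMatrix {d k : ℕ} (φ : Fin k → (Fin d → ℝ)) (π : Fin k → ℝ) :
    Matrix (Fin d) (Fin d) ℝ :=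
  ∑ i, π i • vecMulVec (φ i) (φ i)

open Finset

/-! The leverages `Lᵢ = φᵢᵀ M⁻¹ φᵢ` of a design average to `d`: `∑ πᵢ Lᵢ = tr (M⁻¹ M) = d`, so the
largest one is at least `d`. Conversely, moving mass `s / (1 + s)` onto the point `φᵢ` turns `M` into
`(M + s φᵢ φᵢᵀ) / (1 + s)`, whose determinant is `(1 + s Lᵢ) det M / (1 + s) ^ d` by the matrix
determinant lemma. At a D-optimal design this gives `1 + s Lᵢ ≤ (1 + s) ^ d` for all `s ≥ 0`, and
comparing derivatives at `s = 0` gives `Lᵢ ≤ d`. -/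

theorem Matrix.det_add_vecMulVec {n R : Type*} [Fintype n] [DecidableEq n] [CommRing R]
    {A : Matrix n n R} (hA : IsUnit A.det) (u v : n → R) :
    (A + vecMulVec u v).det = A.det * (1 + v ⬝ᵥ A⁻¹ *ᵥ u) := by
  rw [vecMulVec_eq Unit, det_add_replicateCol_mul_replicateRow hA, Matrix.mul_assoc,
    ← replicateCol_mulVec, det_unique (n := Unit)]
  simp

theorem le_of_forall_one_add_mul_le_pow {L : ℝ} {n : ℕ}
    (h : ∀ s > 0, 1 + s * L ≤ (1 + s) ^ n) : L ≤ n := by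
  have hderiv : HasDerivAt (fun s : ℝ => (1 + s) ^ n - s * L) (n - L) 0 := by
    refine ((((hasDerivAt_id' (0 : ℝ)).const_add 1).fun_pow n).fun_sub
      ((hasDerivAt_id' (0 : ℝ)).mul_const L)).congr_deriv ?_
    simp
  have hslope : 0 ≤ (n : ℝ) - L := by
    refine ge_of_tendsto hderiv.tendsto_slope_zero_right
      (eventually_nhdsWithin_of_forall fun s (hs : 0 < s) => ?_)
    simp only [zero_add, add_zero, one_pow, zero_mul, sub_zero, smul_eq_mul]
    exact mul_nonneg (inv_nonneg.2 hs.le) (by linarith [h s hs])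
  linarith

theorem IsDesign.sum_mul_le_iSup {k : ℕ} {π : Fin k → ℝ} (hπ : IsDesign π) (f : Fin k → ℝ) :
    ∑ i, π i * f i ≤ ⨆ i, f i :=
  calc ∑ i, π i * f i ≤ ∑ i, π i * ⨆ j, f j := by
        gcongr with i
        · exact hπ.1 i
        · exact le_ciSup (Set.finite_range f).bddAbove i
    _ = ⨆ i, f i := by rw [← sum_mul, hπ.2, one_mul]

theorem IsDesign.smul_add_single {k : ℕ} {π : Fin k → ℝ} (hπ : IsDesign π) (i : Fin k)
    {s : ℝ} (hs : 0 ≤ s) : IsDesign ((1 + s)⁻¹ • (π + s • Pi.single i 1)) := by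
  have : IsDesign _ := convex_stdSimplex ℝ (Fin k) hπ (single_mem_stdSimplex ℝ i)
    (a := (1 + s)⁻¹) (b := s * (1 + s)⁻¹) (by positivity) (by positivity) (by field_simp)
  convert this using 1
  rw [smul_add, smul_smul, mul_comm]

section InfoMatrix

variable {d k : ℕ} (φ : Fin k → Fin d → ℝ)

theorem infoMatrix_add (π π' : Fin k → ℝ) :
    infoMatrix φ (π + π') = infoMatrix φ π + infoMatrix φ π' := by
  simp [infoMatrix, add_smul, sum_add_distrib]

theorem infoMatrix_smul (c : ℝ) (π : Fin k → ℝ) :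
    infoMatrix φ (c • π) = c • infoMatrix φ π := by
  simp [infoMatrix, smul_sum, mul_smul]

theorem infoMatrix_single (i : Fin k) (c : ℝ) :
    infoMatrix φ (Pi.single i c) = c • vecMulVec (φ i) (φ i) := by
  simp [infoMatrix, Pi.single_apply]

theorem posSemidef_infoMatrix {π : Fin k → ℝ} (hπ : ∀ i, 0 ≤ π i) :
    (infoMatrix φ π).PosSemidef :=
  posSemidef_sum _ fun i _ => (posSemidef_vecMulVec_self_star (φ i)).smul (hπ i)

theorem trace_mul_infoMatrix (A : Matrix (Fin d) (Fin d) ℝ) (π : Fin k → ℝ) :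
    (A * infoMatrix φ π).trace = ∑ i, π i * (φ i ⬝ᵥ A *ᵥ φ i) := by
  simp [infoMatrix, Matrix.mul_sum, trace_sum, mul_vecMulVec, dotProduct_comm]

end InfoMatrix

section Leverage

variable {d k : ℕ} (φ : Fin k → Fin d → ℝ)

noncomputable def leverage (π : Fin k → ℝ) (i : Fin k) : ℝ :=
  φ i ⬝ᵥ (infoMatrix φ π)⁻¹ *ᵥ φ i

theorem sum_mul_leverage {π : Fin k → ℝ} (hM : IsUnit (infoMatrix φ π)) :
    ∑ i, π i * leverage φ π i = d := by
  unfold leverage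
  rw [← trace_mul_infoMatrix,
    nonsing_inv_mul _ ((isUnit_iff_isUnit_det _).1 hM), trace_one, Fintype.card_fin]

theorem det_infoMatrix_smul_add_single {π : Fin k → ℝ} (hM : IsUnit (infoMatrix φ π))
    (i : Fin k) (s : ℝ) :
    (infoMatrix φ ((1 + s)⁻¹ • (π + s • Pi.single i 1))).det
      = ((1 + s) ^ d)⁻¹ * (1 + s * leverage φ π i) * (infoMatrix φ π).det := by
  rw [infoMatrix_smul, infoMatrix_add, infoMatrix_smul, infoMatrix_single, det_smul,
    one_smul, ← smul_vecMulVec, det_add_vecMulVec ((isUnit_iff_isUnit_det _).1 hM),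
    mulVec_smul, dotProduct_smul, Fintype.card_fin, inv_pow, leverage,
    smul_eq_mul]
  ring

theorem one_add_mul_leverage_le_pow {π : Fin k → ℝ} (hπ : IsDesign π)
    (hM : IsUnit (infoMatrix φ π))
    (hopt : ∀ π', IsDesign π' → (infoMatrix φ π').det ≤ (infoMatrix φ π).det)
    (i : Fin k) {s : ℝ} (hs : 0 ≤ s) :
    1 + s * leverage φ π i ≤ (1 + s) ^ d := by
  have hdet : 0 < (infoMatrix φ π).det :=
    (posSemidef_infoMatrix φ hπ.1).det_nonneg.lt_of_ne' ((isUnit_iff_isUnit_det _).1 hM).ne_zero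
  have hmix := hopt _ (hπ.smul_add_single i hs)
  rwa [det_infoMatrix_smul_add_single φ hM, mul_le_iff_le_one_left hdet,
    inv_mul_le_iff₀ (by positivity), mul_one] at hmix

theorem leverage_le_dim {π : Fin k → ℝ} (hπ : IsDesign π) (hM : IsUnit (infoMatrix φ π))
    (hopt : ∀ π', IsDesign π' → (infoMatrix φ π').det ≤ (infoMatrix φ π).det) (i : Fin k) :
    leverage φ π i ≤ d :=
  le_of_forall_one_add_mul_le_pow fun _ hs => one_add_mul_leverage_le_pow φ hπ hM hopt i hs.le

end Leverage

theorem D_optimal_max_leverage_eq_dim_general {d k : ℕ} (hk : 0 < k)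
    (φ : Fin k → (Fin d → ℝ))
    (πs : Fin k → ℝ) (hπs : IsDesign πs) (hinv : IsUnit (infoMatrix φ πs))
    (hopt : ∀ π, IsDesign π → (infoMatrix φ π).det ≤ (infoMatrix φ πs).det) :
    (⨆ i, φ i ⬝ᵥ (infoMatrix φ πs)⁻¹ *ᵥ φ i) = (d : ℝ) := by
  have : Nonempty (Fin k) := Fin.pos_iff_nonempty.mp hk
  change (⨆ i, leverage φ πs i) = d
  refine le_antisymm (ciSup_le (leverage_le_dim φ hπs hinv hopt)) ?_
  calc (d : ℝ) = ∑ i, πs i * leverage φ πs i := (sum_mul_leverage φ hinv).symm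
    _ ≤ ⨆ i, leverage φ πs i := hπs.sum_mul_le_iSup _

theorem D_optimal_max_leverage_eq_dim {d k : ℕ} (hd : 0 < d) (hk : 0 < k)
    (φ : Fin k → (Fin d → ℝ))
    (hspan : Submodule.span ℝ (Set.range φ) = ⊤)
    (πs : Fin k → ℝ) (hπs : IsDesign πs) (hinv : IsUnit (infoMatrix φ πs))
    (hopt : ∀ π, IsDesign π → (infoMatrix φ π).det ≤ (infoMatrix φ πs).det) :
    (⨆ i, φ i ⬝ᵥ (infoMatrix φ πs)⁻¹ *ᵥ φ i) = (d : ℝ) :=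
  D_optimal_max_leverage_eq_dim_general hk φ πs hπs hinv hopt
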